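/- arXiv:1912.09375 — 6 statements merged into one kernel-verified Lean document; each statement's English description precedes it below -/
import Mathlib

section
/- Let n ≥ 1, let h_1 > h_2 > ... > h_{2n} be integers, and let v_1 ≥ v_2 ≥ ... ≥ v_{2n} be real numbers satisfying the pairing condition and the Newton-above-Hodge condition. If I ⊆ {1,...,2n} is a subset of cardinality n which is non-critical slope, i.e. Σ_{i∈I} v_i − Σ_{i=n+1}^{2n} h_i < h_n − h_{n+1}, then I = {n+1, n+2, ..., 2n} or I = {n, n+2, n+3, ..., 2n}. In particular, there are at most two non-critical slope subsets of cardinality n. -/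
/-!
Write `J = {n+1, …, 2n}`. Then `∑_I v - ∑_J h = (∑_{I \ J} v - ∑_{J \ I} v) + ∑_J (v - h)`.
Newton-above-Hodge on the tail `{n+3, …, 2n}` bounds the last sum below by
`(v (n+1) - h (n+1)) + (v (n+2) - h (n+2))`, and since `v` is antitone and `I \ J ⊆ [1, n]`,
`J \ I ⊆ [n+1, 2n]` have the same size, the exchange term is at least `v a - v b` for any
`a ∈ I \ J`, `b ∈ J \ I`. Unless `I` is one of the two sets of the conclusion, `a` can be chosen
`< n` or `b` can be chosen `> n + 1`; the pairing condition for `(n-1, n+2)`, resp. `(n, n+1)`,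
then bounds `∑_I v - ∑_J h` below by `h (n-1) - h (n+1)`, resp. `h n - h (n+2)`, both larger than
`h n - h (n+1)`.
-/

open Finset

theorem Finset.sub_le_sum_sub_sum_of_card_eq {ι M : Type*} [AddCommGroup M] [PartialOrder M]
    [IsOrderedAddMonoid M] {A B : Finset ι} {f : ι → M} {c : M} (hcard : #A = #B)
    (hA : ∀ x ∈ A, c ≤ f x) (hB : ∀ y ∈ B, f y ≤ c) {a b : ι} (ha : a ∈ A) (hb : b ∈ B) :
    f a - f b ≤ ∑ x ∈ A, f x - ∑ y ∈ B, f y := by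
  classical
  have hA' : #(A.erase a) • c ≤ ∑ x ∈ A.erase a, f x :=
    card_nsmul_le_sum _ _ _ fun x hx => hA x (mem_of_mem_erase hx)
  have hB' : ∑ y ∈ B.erase b, f y ≤ #(B.erase b) • c :=
    sum_le_card_nsmul _ _ _ fun y hy => hB y (mem_of_mem_erase hy)
  rw [card_erase_of_mem ha, hcard, ← card_erase_of_mem hb] at hA'
  rw [← add_sum_erase A f ha, ← add_sum_erase B f hb, add_sub_add_comm]
  exact le_add_of_nonneg_right (sub_nonneg.2 (hB'.trans hA'))

theorem Finset.sum_sub_sum_eq_sum_sdiff_sub_sum_sdiff_add {ι M : Type*} [DecidableEq ι]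
    [AddCommGroup M] (I J : Finset ι) (f g : ι → M) :
    ∑ i ∈ I, f i - ∑ i ∈ J, g i =
      (∑ i ∈ I \ J, f i - ∑ i ∈ J \ I, f i) + ∑ i ∈ J, (f i - g i) := by
  rw [sum_sdiff_sub_sum_sdiff, sum_sub_distrib]
  abel

theorem Finset.sum_Icc_one_reflect {M : Type*} [AddCommMonoid M] (f : ℕ → M) {j N : ℕ}
    (hj : j ≤ N) : ∑ i ∈ Icc 1 j, f (N + 1 - i) = ∑ i ∈ Icc (N + 1 - j) N, f i := by
  rw [← Ico_add_one_right_eq_Icc, sum_Ico_reflect f 1 (by omega : j + 1 ≤ N + 1 + 1),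
    show N + 1 + 1 - (j + 1) = N + 1 - j by omega, Nat.add_sub_cancel, Ico_add_one_right_eq_Icc]

theorem Finset.sum_Icc_le_sum_Icc_of_reflect_le {M : Type*} [AddCommMonoid M] [Preorder M]
    {f g : ℕ → M} {N : ℕ}
    (hfg : ∀ j, 1 ≤ j → j ≤ N → ∑ i ∈ Icc 1 j, f (N + 1 - i) ≤ ∑ i ∈ Icc 1 j, g (N + 1 - i))
    {k : ℕ} (hk : 1 ≤ k) : ∑ i ∈ Icc k N, f i ≤ ∑ i ∈ Icc k N, g i := by
  by_cases hkN : k ≤ N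
  · have := hfg (N + 1 - k) (by omega) (by omega)
    rwa [sum_Icc_one_reflect f (by omega), sum_Icc_one_reflect g (by omega),
      show N + 1 - (N + 1 - k) = k by omega] at this
  · simp [Icc_eq_empty_of_lt (not_le.1 hkN)]

theorem Finset.add_le_sum_Icc {M : Type*} [AddCommMonoid M] [PartialOrder M]
    [IsOrderedAddMonoid M] {f : ℕ → M} {m N : ℕ} (hmN : m + 1 ≤ N)
    (htail : 0 ≤ ∑ i ∈ Icc (m + 2) N, f i) : f m + f (m + 1) ≤ ∑ i ∈ Icc m N, f i := by
  rw [← insert_Icc_add_one_left_eq_Icc (by omega : m ≤ N),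
    ← insert_Icc_add_one_left_eq_Icc hmN, sum_insert (by simp), sum_insert (by simp),
    ← add_assoc]
  exact le_add_of_nonneg_right htail

theorem Nat.antitoneOn_Icc_of_succ_le {α : Type*} [Preorder α] {f : ℕ → α} {a b : ℕ}
    (hf : ∀ i, a ≤ i → i < b → f (i + 1) ≤ f i) : AntitoneOn f (Set.Icc a b) :=
  antitoneOn_of_succ_le Set.ordConnected_Icc fun i _ hi hsi => by
    simp only [Order.succ_eq_add_one, Set.mem_Icc] at hi hsi ⊢
    exact hf i hi.1 (by omega)

theorem exists_exchange_of_ne {n : ℕ} {I : Finset ℕ} (hI : I ⊆ Icc 1 (2 * n)) (hcard : #I = n)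
    (hJ : I ≠ Icc (n + 1) (2 * n)) (hJ' : I ≠ insert n (Icc (n + 2) (2 * n))) :
    ∃ a ∈ I \ Icc (n + 1) (2 * n), ∃ b ∈ Icc (n + 1) (2 * n) \ I, a < n ∨ n + 1 < b := by
  set J := Icc (n + 1) (2 * n)
  have hcardJ : #J = n := by simp [J]; omega
  obtain ⟨a, ha⟩ : (I \ J).Nonempty := by
    rw [nonempty_iff_ne_empty, Ne, sdiff_eq_empty_iff_subset]
    exact fun hsub => hJ (eq_of_subset_of_card_le hsub (by omega))
  obtain ⟨b, hb⟩ : (J \ I).Nonempty := by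
    rw [← card_pos, ← card_sdiff_comm (hcard.trans hcardJ.symm)]
    exact card_pos.2 ⟨a, ha⟩
  by_contra! hnear
  have hIJ : ∀ x ∈ I, x ∉ J → x = n := fun x hx hxJ => by
    have := mem_Icc.1 (hI hx)
    have := (hnear x (mem_sdiff.2 ⟨hx, hxJ⟩) b hb).1
    simp only [J, mem_Icc] at hxJ
    omega
  have hJI : ∀ y ∈ J, y ∉ I → y = n + 1 := fun y hy hyI => by
    have := (hnear a ha y (mem_sdiff.2 ⟨hy, hyI⟩)).2
    simp only [J, mem_Icc] at hy
    omega
  rw [mem_sdiff] at ha hb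
  have hnI : n ∈ I := hIJ a ha.1 ha.2 ▸ ha.1
  have hn1I : n + 1 ∉ I := hJI b hb.1 hb.2 ▸ hb.2
  apply hJ'
  ext x
  simp only [mem_insert, mem_Icc]
  constructor
  · intro hx
    by_cases hxJ : x ∈ J
    · simp only [J, mem_Icc] at hxJ
      have : x ≠ n + 1 := fun h => hn1I (h ▸ hx)
      omega
    · exact Or.inl (hIJ x hx hxJ)
  · rintro (rfl | hx)
    · exact hnI
    · by_contra hxI
      have := hJI x (by simp only [J, mem_Icc]; omega) hxI
      omega

theorem sub_add_le_sum_sub_sum_of_exchange {n a b : ℕ} {v w : ℕ → ℝ} {I : Finset ℕ}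
    (hv : AntitoneOn v (Set.Icc 1 (2 * n)))
    (newton : ∀ j, 1 ≤ j → j ≤ 2 * n →
      ∑ i ∈ Icc 1 j, w (2 * n + 1 - i) ≤ ∑ i ∈ Icc 1 j, v (2 * n + 1 - i))
    (hI : I ⊆ Icc 1 (2 * n)) (hcard : #I = n) (hn : 2 ≤ n)
    (ha : a ∈ I \ Icc (n + 1) (2 * n)) (hb : b ∈ Icc (n + 1) (2 * n) \ I) :
    v a - v b + ((v (n + 1) - w (n + 1)) + (v (n + 2) - w (n + 2))) ≤
      ∑ i ∈ I, v i - ∑ i ∈ Icc (n + 1) (2 * n), w i := by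
  have hIv : ∀ x ∈ I \ Icc (n + 1) (2 * n), v (n + 1) ≤ v x := fun x hx => by
    have hxI := mem_Icc.1 (hI (mem_sdiff.1 hx).1)
    simp only [mem_sdiff, mem_Icc] at hx
    exact hv hxI ⟨by omega, by omega⟩ (by omega)
  have hJv : ∀ y ∈ Icc (n + 1) (2 * n) \ I, v y ≤ v (n + 1) := fun y hy => by
    simp only [mem_sdiff, mem_Icc] at hy
    exact hv ⟨by omega, by omega⟩ ⟨by omega, hy.1.2⟩ hy.1.1
  have hexch := sub_le_sum_sub_sum_of_card_eq
    (card_sdiff_comm (by simp [hcard]; omega)) hIv hJv ha hb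
  have htail : 0 ≤ ∑ i ∈ Icc (n + 1 + 2) (2 * n), (v i - w i) := by
    rw [sum_sub_distrib, sub_nonneg]
    exact sum_Icc_le_sum_Icc_of_reflect_le newton (by omega)
  rw [sum_sub_sum_eq_sum_sdiff_sub_sum_sdiff_add]
  exact add_le_add hexch (add_le_sum_Icc (by omega) htail)

theorem at_most_two_non_critical_slope_stabilisations_general
    (n : ℕ) (h : ℕ → ℤ) (v : ℕ → ℝ)
    (hdec : ∀ i, 1 ≤ i → i < 2 * n → h (i + 1) < h i)
    (vdec : ∀ i, 1 ≤ i → i < 2 * n → v (i + 1) ≤ v i)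
    (pairing : ∀ i, 1 ≤ i → i ≤ n →
      v i + v (2 * n + 1 - i) = (h i : ℝ) + (h (2 * n + 1 - i) : ℝ))
    (newton_above_hodge : ∀ j, 1 ≤ j → j ≤ 2 * n →
      ∑ i ∈ Icc 1 j, (h (2 * n + 1 - i) : ℝ) ≤ ∑ i ∈ Icc 1 j, v (2 * n + 1 - i))
    (I : Finset ℕ) (hI : I ⊆ Icc 1 (2 * n)) (hcard : I.card = n)
    (hncs : ∑ i ∈ I, v i - ∑ i ∈ Icc (n + 1) (2 * n), (h i : ℝ)
      < (h n : ℝ) - (h (n + 1) : ℝ)) :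
    I = Icc (n + 1) (2 * n) ∨ I = insert n (Icc (n + 2) (2 * n)) := by
  have hv : AntitoneOn v (Set.Icc 1 (2 * n)) := Nat.antitoneOn_Icc_of_succ_le vdec
  by_contra! hne
  obtain ⟨a, ha, b, hb, hab⟩ := exists_exchange_of_ne hI hcard hne.1 hne.2
  obtain ⟨ha1, ha2⟩ := mem_Icc.1 (hI (mem_sdiff.1 ha).1)
  have hbound := sub_add_le_sum_sub_sum_of_exchange (w := fun i => (h i : ℝ)) hv
    newton_above_hodge hI hcard (by simp only [mem_sdiff, mem_Icc] at hb; omega) ha hb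
  simp only [mem_sdiff, mem_Icc] at ha hb
  rcases hab with ha' | hb'
  · have hpair := pairing (n - 1) (by omega) (by omega)
    have hgap := hdec (n - 1) (by omega) (by omega)
    rw [show 2 * n + 1 - (n - 1) = n + 2 by omega] at hpair
    rw [Nat.sub_add_cancel (by omega)] at hgap
    have : (h n : ℝ) < h (n - 1) := by exact_mod_cast hgap
    linarith [hv ⟨ha1, ha2⟩ ⟨by omega, by omega⟩ (by omega : a ≤ n - 1),
      hv ⟨by omega, by omega⟩ ⟨by omega, hb.1.2⟩ hb.1.1]
  · have hpair := pairing n (by omega) le_rfl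
    have hgap : (h (n + 2) : ℝ) < h (n + 1) := by
      exact_mod_cast hdec (n + 1) (by omega) (by omega)
    rw [show 2 * n + 1 - n = n + 1 by omega] at hpair
    linarith [hv ⟨ha1, ha2⟩ ⟨by omega, by omega⟩ (by omega : a ≤ n),
      hv ⟨by omega, by omega⟩ ⟨by omega, hb.1.2⟩ (by omega : n + 2 ≤ b)]

/-- Let `n ≥ 1`, let `h 1 > h 2 > ... > h (2n)` be integers (Hodge–Tate
weights) and `v 1 ≥ v 2 ≥ ... ≥ v (2n)` real numbers (valuations of Satake parameters)
satisfying the pairing condition and the Newton-above-Hodge condition.  If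
`I ⊆ {1, ..., 2n}` has cardinality `n` and is non-critical slope, i.e.
`∑_{i ∈ I} v i − ∑_{i = n+1}^{2n} h i < h n − h (n+1)`, then
`I = {n+1, ..., 2n}` or `I = {n} ∪ {n+2, ..., 2n}`.  In particular there are at most two
non-critical slope subsets of cardinality `n`. -/
theorem at_most_two_non_critical_slope_stabilisations
    (n : ℕ) (hn : 1 ≤ n) (h : ℕ → ℤ) (v : ℕ → ℝ)
    (hdec : ∀ i, 1 ≤ i → i < 2 * n → h (i + 1) < h i)
    (vdec : ∀ i, 1 ≤ i → i < 2 * n → v (i + 1) ≤ v i)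
    (pairing : ∀ i, 1 ≤ i → i ≤ n →
      v i + v (2 * n + 1 - i) = (h i : ℝ) + (h (2 * n + 1 - i) : ℝ))
    (newton_above_hodge : ∀ j, 1 ≤ j → j ≤ 2 * n →
      ∑ i ∈ Icc 1 j, (h (2 * n + 1 - i) : ℝ) ≤ ∑ i ∈ Icc 1 j, v (2 * n + 1 - i))
    (endpoints : ∑ i ∈ Icc 1 (2 * n), v (2 * n + 1 - i)
      = ∑ i ∈ Icc 1 (2 * n), (h (2 * n + 1 - i) : ℝ))
    (I : Finset ℕ) (hI : I ⊆ Icc 1 (2 * n)) (hcard : I.card = n)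
    (hncs : ∑ i ∈ I, v i - ∑ i ∈ Icc (n + 1) (2 * n), (h i : ℝ)
      < (h n : ℝ) - (h (n + 1) : ℝ)) :
    I = Icc (n + 1) (2 * n) ∨ I = insert n (Icc (n + 2) (2 * n)) :=
  at_most_two_non_critical_slope_stabilisations_general n h v hdec vdec pairing newton_above_hodge I
    hI hcard hncs
end

section
/- Let p be an odd prime, γ ∈ ℤ_p with v_p(γ − 1) = 1, and j ∈ ℤ. For n ≥ 1, consider the polynomial P(X) = Φ_{p^n}(γ^{−j}(1 + X))/p ∈ ℚ_p[X], where Φ_{p^n} is the p^n-th cyclotomic polynomial. Then for every integer h ≥ 0: v_h(P) = 0 if h ≤ n − 1, and v_h(P) = p^{n−1−h} − 1 if h ≥ n. -/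
open Polynomial

namespace Stmt4

open scoped Classical

/-- The `p`-adic valuation on `ℚ_p`, with value `⊤` at `0`, realised as
`v_p(x) = -log_p ‖x‖`. -/
noncomputable def vp (p : ℕ) [Fact p.Prime] (x : ℚ_[p]) : EReal :=
  if x = 0 then ⊤ else ((-Real.logb p ‖x‖ : ℝ) : EReal)

/-- `u_h = 1 / (p^h (p - 1))`. -/
noncomputable def u (p : ℕ) (h : ℕ) : ℝ := 1 / ((p : ℝ) ^ h * ((p : ℝ) - 1))

/-- The Gauss valuation `v_h(f) = inf_k (v_p(a_k) + k u_h)` of a polynomial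
`f = ∑ a_k X^k`, i.e. the sup-norm valuation on the closed disk
`{x : v_p(x) ≥ u_h}`. -/
noncomputable def vh (p : ℕ) [Fact p.Prime] (f : Polynomial ℚ_[p]) (h : ℕ) : EReal :=
  ⨅ k : ℕ, vp p (f.coeff k) + (((k : ℝ) * u p h : ℝ) : EReal)


/-! Put `a = γ^{-j}`, a `p`-adic integer with `a ≡ 1 mod p`, and `Q(X) = Φ_{p^n}(a(1 + X))`, so
that `P = Q / p`. Modulo `p`, `Φ_{p^n} = (X - 1)^d` with `d = φ(p^n)`, hence `Q ≡ X^d`: the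
coefficient of `X^d` in `Q` is a unit and all others are divisible by `p`. The constant term
`Q(0) = Φ_p(b)`, `b = a^{p^{n-1}} ≡ 1 mod p`, has valuation exactly `1` because
`p² ∣ Φ_p(1 + pc) - p` for odd `p`. So `v_p` of the coefficients of `P` is `0` at `X^0`, `-1` at
`X^d` and `≥ 0` elsewhere, which gives `v_h(P) = min(0, d u_h - 1)` with `d u_h = p^{n-1-h}`. -/

open Finset

variable {p : ℕ} [Fact p.Prime]

theorem map_val_units_zpow {M N F : Type*} [Monoid M] [DivisionMonoid N] [FunLike F M N]
    [MonoidHomClass F M N] (f : F) (u : Mˣ) (j : ℤ) : f ↑(u ^ j) = f ↑u ^ j := by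
  rw [← MonoidHom.coe_coe f, ← Units.coe_map, map_zpow, Units.val_zpow_eq_zpow_val,
    Units.coe_map]

theorem cyclotomic_prime_pow_eq_X_sub_one_pow (R : Type*) [CommRing R] [CharP R p] (n : ℕ) :
    cyclotomic (p ^ n) R = (X - 1) ^ (p ^ n).totient := by
  rcases n with _ | k
  · simp
  · rw [← mul_one (p ^ (k + 1)), cyclotomic_mul_prime_pow_eq R (Nat.Prime.not_dvd_one Fact.out)
      k.succ_pos, cyclotomic_one, mul_one, Nat.totient_prime_pow_succ Fact.out, Nat.mul_sub_one,
      ← pow_succ]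
    rfl

theorem vp_eq_of_norm_eq_zpow {x : ℚ_[p]} {m : ℤ} (hx : ‖x‖ = (p : ℝ) ^ (-m)) :
    vp p x = ((m : ℝ) : EReal) := by
  have hp1 : (1 : ℝ) < p := Nat.one_lt_cast.mpr (Fact.out : p.Prime).one_lt
  have hx0 : x ≠ 0 := by
    rintro rfl
    exact (zpow_pos (by linarith) _).ne' (hx.symm.trans norm_zero)
  rw [vp, if_neg hx0, hx, ← Real.rpow_intCast, Real.logb_rpow (by linarith) hp1.ne',
    Int.cast_neg, neg_neg]

theorem vp_nonneg_of_norm_le_one {x : ℚ_[p]} (hx : ‖x‖ ≤ 1) : 0 ≤ vp p x := by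
  unfold vp
  split_ifs
  · exact le_top
  · exact EReal.coe_nonneg.mpr <| neg_nonneg.mpr <|
      Real.logb_nonpos (Nat.one_lt_cast.mpr (Fact.out : p.Prime).one_lt) (norm_nonneg _) hx

theorem u_pos (h : ℕ) : 0 < u p h := by
  have hp1 : (1 : ℝ) < p := Nat.one_lt_cast.mpr (Fact.out : p.Prime).one_lt
  unfold u
  have : (0 : ℝ) < (p : ℝ) - 1 := by linarith
  positivity

theorem totient_prime_pow_mul_u {n : ℕ} (hn : 1 ≤ n) (h : ℕ) :
    ((p ^ n).totient : ℝ) * u p h = (p : ℝ) ^ ((n : ℤ) - 1 - h) := by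
  have hp1 : (1 : ℝ) < p := Nat.one_lt_cast.mpr (Fact.out : p.Prime).one_lt
  have : (p : ℝ) - 1 ≠ 0 := by linarith
  obtain ⟨m, rfl⟩ := Nat.exists_eq_add_of_le' hn
  rw [Nat.totient_prime_pow Fact.out (by omega), u, zpow_sub₀ (by positivity)]
  push_cast [Nat.cast_sub (Fact.out : p.Prime).one_lt.le]
  simp only [add_sub_cancel_right, zpow_natCast]
  field_simp

theorem vh_eq_min_of_norm_coeff (f : ℚ_[p][X]) (d h : ℕ) (h0 : ‖f.coeff 0‖ = 1)
    (hd : ‖f.coeff d‖ = p) (hk : ∀ k ≠ d, ‖f.coeff k‖ ≤ 1) :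
    vh p f h = ((min 0 (d * u p h - 1) : ℝ) : EReal) := by
  have hv0 : vp p (f.coeff 0) = ((0 : ℤ) : ℝ) := vp_eq_of_norm_eq_zpow (by simpa using h0)
  have hvd : vp p (f.coeff d) = ((-1 : ℤ) : ℝ) := vp_eq_of_norm_eq_zpow (by simpa using hd)
  have hterm_d :
      vp p (f.coeff d) + (((d : ℝ) * u p h : ℝ) : EReal) = ((d * u p h - 1 : ℝ) : EReal) := by
    rw [hvd, ← EReal.coe_add]
    congr 1
    push_cast
    ring
  rw [EReal.coe_strictMono.monotone.map_min]
  apply le_antisymm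
  · refine le_min ((iInf_le _ 0).trans ?_) ((iInf_le _ d).trans hterm_d.le)
    simp [hv0]
  · refine le_iInf fun k => ?_
    obtain rfl | hkd := eq_or_ne k d
    · exact hterm_d.ge.trans' (min_le_right _ _)
    · refine (min_le_left _ _).trans ?_
      exact add_nonneg (vp_nonneg_of_norm_le_one (hk k hkd))
        (EReal.coe_nonneg.mpr (mul_nonneg (Nat.cast_nonneg k) (u_pos h).le))

open PadicInt

theorem toZMod_eq_zero_iff_norm_lt_one (x : ℤ_[p]) : toZMod x = 0 ↔ ‖x‖ < 1 := by
  rw [← RingHom.mem_ker, ker_toZMod, IsLocalRing.mem_maximalIdeal, mem_nonunits]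

theorem norm_le_inv_of_toZMod_eq_zero {x : ℤ_[p]} (hx : toZMod x = 0) :
    ‖x‖ ≤ (p : ℝ)⁻¹ := by
  simpa using (norm_le_pow_iff_norm_lt_pow_add_one x (-1)).mpr
    (by simpa using (toZMod_eq_zero_iff_norm_lt_one x).mp hx)

theorem norm_eq_one_of_toZMod_ne_zero {x : ℤ_[p]} (hx : toZMod x ≠ 0) : ‖x‖ = 1 :=
  (norm_le_one x).antisymm (not_lt.mp (mt (toZMod_eq_zero_iff_norm_lt_one x).mpr hx))

theorem toZMod_eq_one_of_norm_sub_one_lt {x : ℤ_[p]} (hx : ‖x - 1‖ < 1) : toZMod x = 1 := by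
  rw [← sub_eq_zero, ← map_one toZMod, ← map_sub, toZMod_eq_zero_iff_norm_lt_one]
  exact hx

theorem exists_toZMod_eq_one_coe_eq_zpow {γ : ℤ_[p]} (hγ : toZMod γ = 1) (j : ℤ) :
    ∃ a : ℤ_[p], toZMod a = 1 ∧ (a : ℚ_[p]) = (γ : ℚ_[p]) ^ j := by
  have hunit : IsUnit γ := isUnit_iff.mpr (norm_eq_one_of_toZMod_ne_zero (by simp [hγ]))
  refine ⟨↑(hunit.unit ^ j), ?_, ?_⟩
  · have := map_val_units_zpow toZMod hunit.unit j
    simpa [hγ] using this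
  · exact map_val_units_zpow Coe.ringHom hunit.unit j

theorem norm_geom_sum_prime (hp : Odd p) {b : ℤ_[p]} (hb : toZMod b = 1) :
    ‖∑ i ∈ range p, b ^ i‖ = (p : ℝ)⁻¹ := by
  obtain ⟨c, hc⟩ : (p : ℤ_[p]) ∣ b - 1 := by
    rw [← norm_lt_one_iff_dvd, ← toZMod_eq_zero_iff_norm_lt_one, map_sub, hb, map_one, sub_self]
  obtain ⟨t, ht⟩ := odd_sq_dvd_geom_sum₂_sub (R := ℤ_[p]) (a := 1) (b := c) hp
  rw [show 1 + (p : ℤ_[p]) * c = b by rw [← hc]; ring] at ht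
  simp only [one_pow, mul_one] at ht
  have hunit : toZMod (1 + (p : ℤ_[p]) * t) ≠ 0 := by simp
  rw [show ∑ i ∈ range p, b ^ i = p * (1 + p * t) by linear_combination ht, norm_mul, norm_p,
    norm_eq_one_of_toZMod_ne_zero hunit, mul_one]

theorem map_toZMod_cyclotomic_comp (n : ℕ) {a : ℤ_[p]} (ha : toZMod a = 1) :
    ((cyclotomic (p ^ n) ℤ_[p]).comp (C a * (1 + X))).map toZMod = X ^ (p ^ n).totient := by
  rw [Polynomial.map_comp, map_cyclotomic, cyclotomic_prime_pow_eq_X_sub_one_pow]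
  simp [ha]

theorem norm_coeff_zero_cyclotomic_comp (hp : Odd p) {n : ℕ} (hn : 1 ≤ n) {a : ℤ_[p]}
    (ha : toZMod a = 1) :
    ‖((cyclotomic (p ^ n) ℤ_[p]).comp (C a * (1 + X))).coeff 0‖ = (p : ℝ)⁻¹ := by
  obtain ⟨m, rfl⟩ := Nat.exists_eq_add_of_le' hn
  rw [coeff_zero_eq_eval_zero, eval_comp, cyclotomic_prime_pow_eq_geom_sum Fact.out]
  simp only [eval_mul, eval_add, eval_one, eval_C, eval_X, add_zero, mul_one, eval_finsetSum,
    eval_pow]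
  exact norm_geom_sum_prime hp (by rw [map_pow, ha, one_pow])

theorem vh_C_inv_mul_map_eq_min (Q : ℤ_[p][X]) (d h : ℕ) (hQ : Q.map toZMod = X ^ d)
    (h0 : ‖Q.coeff 0‖ = (p : ℝ)⁻¹) :
    vh p (C (p : ℚ_[p])⁻¹ * Q.map Coe.ringHom) h =
      ((min 0 (d * u p h - 1) : ℝ) : EReal) := by
  have hp0 : (0 : ℝ) < p := Nat.cast_pos.mpr (Fact.out : p.Prime).pos
  have hcoeff (k : ℕ) :
      ‖(C (p : ℚ_[p])⁻¹ * Q.map Coe.ringHom).coeff k‖ = p * ‖Q.coeff k‖ := by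
    rw [coeff_C_mul, coeff_map, norm_mul, norm_inv, Padic.norm_p, inv_inv]
    rfl
  have hmod (k : ℕ) : toZMod (Q.coeff k) = if k = d then 1 else 0 := by
    rw [← coeff_map, hQ, coeff_X_pow]
  refine vh_eq_min_of_norm_coeff _ d h ?_ ?_ fun k hk => ?_
  · rw [hcoeff, h0, mul_inv_cancel₀ hp0.ne']
  · rw [hcoeff, norm_eq_one_of_toZMod_ne_zero (by simp [hmod]), mul_one]
  · calc _ = p * ‖Q.coeff k‖ := hcoeff k
      _ ≤ p * (p : ℝ)⁻¹ := by
        gcongr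
        exact norm_le_inv_of_toZMod_eq_zero (by simp [hmod, hk])
      _ = 1 := mul_inv_cancel₀ hp0.ne'

/-- Let `p` be an odd prime, `γ ∈ ℤ_p` with `v_p(γ - 1) = 1`
(equivalently `‖γ - 1‖ = p⁻¹`), and `j ∈ ℤ`.  For `n ≥ 1` consider the polynomial
`P(X) = Φ_{p^n}(γ^{-j}(1 + X)) / p ∈ ℚ_p[X]`, with `Φ_{p^n}` the `p^n`-th cyclotomic
polynomial.  Then for every integer `h ≥ 0`: `v_h(P) = 0` if `h ≤ n - 1`, and
`v_h(P) = p^{n - 1 - h} - 1` if `h ≥ n`. -/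
theorem gauss_valuation_of_cyclotomic_factor
    (p : ℕ) [Fact p.Prime] (hp : Odd p) (γ : ℤ_[p]) (hγ : ‖γ - 1‖ = (p : ℝ)⁻¹)
    (j : ℤ) (n : ℕ) (hn : 1 ≤ n)
    (P : Polynomial ℚ_[p])
    (hP : P = Polynomial.C ((p : ℚ_[p]))⁻¹ *
      (Polynomial.cyclotomic (p ^ n) ℚ_[p]).comp
        (Polynomial.C (((γ : ℚ_[p])) ^ (-j)) * (1 + Polynomial.X))) :
    ∀ h : ℕ,
      (h ≤ n - 1 → vh p P h = (0 : EReal)) ∧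
      (n ≤ h → vh p P h = (((p : ℝ) ^ ((n : ℤ) - 1 - (h : ℤ)) - 1 : ℝ) : EReal)) := by
  intro h
  have hp1 : (1 : ℝ) < p := Nat.one_lt_cast.mpr (Fact.out : p.Prime).one_lt
  obtain ⟨a, ha, haγ⟩ := exists_toZMod_eq_one_coe_eq_zpow
    (toZMod_eq_one_of_norm_sub_one_lt (hγ ▸ inv_lt_one_of_one_lt₀ hp1)) (-j)
  have hPQ : P = C (p : ℚ_[p])⁻¹ *
      ((cyclotomic (p ^ n) ℤ_[p]).comp (C a * (1 + X))).map Coe.ringHom := by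
    rw [hP, Polynomial.map_comp, map_cyclotomic, Polynomial.map_mul, map_C, Polynomial.map_add,
      Polynomial.map_one, Polynomial.map_X, ← haγ]
    rfl
  rw [hPQ, vh_C_inv_mul_map_eq_min _ _ h (map_toZMod_cyclotomic_comp n ha)
    (norm_coeff_zero_cyclotomic_comp hp hn ha), totient_prime_pow_mul_u hn]
  refine ⟨fun hh => ?_, fun hh => ?_⟩
  · rw [min_eq_left (sub_nonneg.mpr (one_le_zpow₀ hp1.le (by omega))), EReal.coe_zero]
  · rw [min_eq_right (sub_nonpos.mpr (zpow_le_one_of_nonpos₀ hp1.le (by omega)))]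

end Stmt4
end

section
/- Let p be a prime, L a finite extension of ℚ_p, and K an algebraically closed field containing L, complete with respect to a valuation v_p extending the p-adic valuation. Let f = Σ_{n≥0} a_n T^n ∈ L[[T]] be a nonzero power series whose coefficients have valuations bounded below (equivalently, f ∈ O_L[[T]] ⊗_{O_L} L, with O_L the ring of integers of L). Then f converges at every x ∈ K with v_p(x) > 0, and the set of zeros {x ∈ K : v_p(x) > 0 and f(x) = 0} is finite. -/
open PowerSeries

/-!
This is Strassmann's theorem. In an ultrametric field a power series with bounded coefficients
converges on the open unit disc, and if `a N` is a coefficient of maximal norm it has at most `N`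
zeros there. If `N = 0`, the constant term strictly dominates every other term. If `f(y) = 0`,
then `f(x) = (x - y) g(x)`, where the coefficients of `g` are bounded by `‖a N‖` and its
coefficient of index `N - 1` still has norm `‖a N‖`. Over a finite extension `L` of `ℚ_p` the
norms of a bounded sequence attain their supremum, because `L` is locally compact and nonzero
spheres are open.
-/

section Maximum

variable {E ι : Type*} [SeminormedAddCommGroup E] [ProperSpace E] [IsUltrametricDist E]

theorem exists_forall_norm_le_norm_of_isBounded [Nonempty ι] {c : ι → E}
    (hc : Bornology.IsBounded (Set.range c)) : ∃ N, ∀ i, ‖c i‖ ≤ ‖c N‖ := by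
  obtain ⟨y, hy, hmax⟩ := hc.isCompact_closure.exists_isMaxOn
    ((Set.range_nonempty c).mono subset_closure) continuous_norm.continuousOn
  have hle : ∀ i, ‖c i‖ ≤ ‖y‖ := fun i => hmax (subset_closure (Set.mem_range_self i))
  by_cases hy0 : ‖y‖ = 0
  · exact ⟨Classical.arbitrary ι, fun i => (hle i).trans (hy0 ▸ norm_nonneg _)⟩
  obtain ⟨_, hz, N, rfl⟩ := mem_closure_iff.1 hy _
    (IsUltrametricDist.isOpen_sphere (x := 0) hy0) (mem_sphere_zero_iff_norm.2 rfl)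
  exact ⟨N, fun i => (hle i).trans_eq (mem_sphere_zero_iff_norm.1 hz).symm⟩

end Maximum

section DoubleSeries

variable {E : Type*} [NormedAddCommGroup E] [CompleteSpace E] {G : ℕ × ℕ → E}

theorem tsum_prod_eq_tsum_zero_add_tsum_succ_fst (hG : Summable fun q => ‖G q‖) :
    ∑' q, G q = ∑' j, G (0, j) + ∑' q : ℕ × ℕ, G (q.1 + 1, q.2) := by
  have hshift : Summable fun q : ℕ × ℕ => G (q.1 + 1, q.2) :=
    hG.of_norm.comp_injective fun q q' h => by simpa [Prod.ext_iff] using h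
  rw [hG.of_norm.tsum_prod, hG.of_norm.prod.tsum_eq_zero_add, hshift.tsum_prod]

theorem tsum_prod_eq_tsum_zero_add_tsum_succ_snd (hG : Summable fun q => ‖G q‖) :
    ∑' q, G q = ∑' i, G (i, 0) + ∑' q : ℕ × ℕ, G (q.1, q.2 + 1) := by
  have hswap := tsum_prod_eq_tsum_zero_add_tsum_succ_fst (G := G ∘ Prod.swap)
    ((Equiv.prodComm ℕ ℕ).summable_iff.2 hG)
  refine ((Equiv.prodComm ℕ ℕ).tsum_eq G).symm.trans (hswap.trans ?_)
  exact congrArg _ ((Equiv.prodComm ℕ ℕ).tsum_eq fun q => G (q.1, q.2 + 1))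

end DoubleSeries

section UnitBall

variable {K : Type*} [NormedField K]

theorem summable_norm_mul_pow_of_norm_le {a : ℕ → K} {C : ℝ} (ha : ∀ n, ‖a n‖ ≤ C) {x : K}
    (hx : ‖x‖ < 1) : Summable fun n => ‖a n * x ^ n‖ :=
  .of_nonneg_of_le (fun _ => norm_nonneg _)
    (fun n => by rw [norm_mul, norm_pow]; gcongr; exact ha n)
    ((summable_geometric_of_lt_one (norm_nonneg x) hx).mul_left C)

theorem summable_norm_mul_pow_mul_pow_of_norm_le {a : ℕ → K} {C : ℝ} (ha : ∀ n, ‖a n‖ ≤ C)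
    {x y : K} (hx : ‖x‖ < 1) (hy : ‖y‖ < 1) :
    Summable fun q : ℕ × ℕ => ‖a (q.1 + q.2) * y ^ q.2 * x ^ q.1‖ := by
  have hC : 0 ≤ C := (norm_nonneg _).trans (ha 0)
  exact .of_nonneg_of_le (fun _ => norm_nonneg _)
    (fun q => by
      rw [norm_mul, norm_mul, norm_pow, norm_pow, mul_right_comm]; gcongr; exact ha _)
    (.mul_of_nonneg ((summable_geometric_of_lt_one (norm_nonneg x) hx).mul_left C)
      (summable_geometric_of_lt_one (norm_nonneg y) hy)
      (fun _ => by positivity)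
      (fun _ => by positivity))

theorem norm_tsum_mul_pow_le [IsUltrametricDist K] {a : ℕ → K} {C : ℝ} (ha : ∀ n, ‖a n‖ ≤ C)
    {x : K} (hx : ‖x‖ ≤ 1) : ‖∑' n, a n * x ^ n‖ ≤ C :=
  IsUltrametricDist.norm_tsum_le_of_forall_le_of_nonneg ((norm_nonneg _).trans (ha 0))
    fun n => by
      rw [norm_mul, norm_pow]
      exact (mul_le_of_le_one_right (norm_nonneg _) (pow_le_one₀ (norm_nonneg x) hx)).trans
        (ha n)

def zerosInUnitBall (a : ℕ → K) : Set K := {x | ‖x‖ < 1 ∧ ∑' n, a n * x ^ n = 0}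

section Complete

variable [CompleteSpace K]

theorem summable_mul_pow_of_norm_le {a : ℕ → K} {C : ℝ} (ha : ∀ n, ‖a n‖ ≤ C) {x : K}
    (hx : ‖x‖ < 1) : Summable fun n => a n * x ^ n :=
  (summable_norm_mul_pow_of_norm_le ha hx).of_norm

theorem tsum_mul_pow_sub_tsum_mul_pow {a : ℕ → K} {C : ℝ} (ha : ∀ n, ‖a n‖ ≤ C) {x y : K}
    (hx : ‖x‖ < 1) (hy : ‖y‖ < 1) :
    ∑' n, a n * x ^ n - ∑' n, a n * y ^ n =
      (x - y) * ∑' i, (∑' j, a (i + j + 1) * y ^ j) * x ^ i := by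
  -- Splitting off the first row, resp. column, of `∑ a (i + j) y ^ j x ^ i` leaves
  -- `f y + x * T`, resp. `f x + y * T`.
  set T := ∑' q : ℕ × ℕ, a (q.1 + q.2 + 1) * y ^ q.2 * x ^ q.1
  have hG := summable_norm_mul_pow_mul_pow_of_norm_le ha hx hy
  have hrow := tsum_prod_eq_tsum_zero_add_tsum_succ_fst hG
  have hcol := tsum_prod_eq_tsum_zero_add_tsum_succ_snd hG
  have hrow_shift : ∀ q : ℕ × ℕ, a (q.1 + 1 + q.2) * y ^ q.2 * x ^ (q.1 + 1) =
      x * (a (q.1 + q.2 + 1) * y ^ q.2 * x ^ q.1) := fun q => by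
    rw [Nat.add_right_comm]; ring
  have hcol_shift : ∀ q : ℕ × ℕ, a (q.1 + (q.2 + 1)) * y ^ (q.2 + 1) * x ^ q.1 =
      y * (a (q.1 + q.2 + 1) * y ^ q.2 * x ^ q.1) := fun q => by
    rw [← add_assoc]; ring
  simp only [zero_add, pow_zero, mul_one, add_zero, hrow_shift, hcol_shift, tsum_mul_left]
    at hrow hcol
  have hT : T = ∑' i, (∑' j, a (i + j + 1) * y ^ j) * x ^ i := by
    have hH := summable_norm_mul_pow_mul_pow_of_norm_le (a := fun n => a (n + 1))
      (fun n => ha (n + 1)) hx hy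
    simp only [T, hH.of_norm.tsum_prod, tsum_mul_right]
  rw [← hT]
  linear_combination hrow - hcol

variable [IsUltrametricDist K]

theorem norm_tsum_mul_pow_eq_norm_zero {a : ℕ → K} (ha : ∀ n, ‖a n‖ ≤ ‖a 0‖) {x : K}
    (hx : ‖x‖ < 1) : ‖∑' n, a n * x ^ n‖ = ‖a 0‖ := by
  have htail : ‖(∑' n, a (n + 1) * x ^ n) * x‖ ≤ ‖a 0‖ * ‖x‖ := by
    rw [norm_mul]; gcongr; exact norm_tsum_mul_pow_le (fun n => ha (n + 1)) hx.le
  rw [(summable_mul_pow_of_norm_le ha hx).tsum_eq_zero_add]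
  simp only [pow_zero, mul_one, pow_succ, ← mul_assoc, tsum_mul_right]
  rcases (norm_nonneg (a 0)).eq_or_lt with h0 | h0
  · have hzero : ∀ n, a n = 0 := fun n => norm_le_zero_iff.1 (h0 ▸ ha n)
    simp [hzero]
  · have hlt := htail.trans_lt (mul_lt_of_lt_one_right h0 hx)
    rw [IsUltrametricDist.norm_add_eq_max_of_norm_ne_norm hlt.ne', max_eq_left hlt.le]

theorem encard_zerosInUnitBall_le {N : ℕ} {a : ℕ → K} (hN : a N ≠ 0)
    (ha : ∀ n, ‖a n‖ ≤ ‖a N‖) : (zerosInUnitBall a).encard ≤ N := by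
  induction N generalizing a with
  | zero =>
    refine (Set.encard_eq_zero.2 (Set.eq_empty_of_forall_notMem fun x hx => hN ?_)).le
    rw [← norm_eq_zero, ← norm_tsum_mul_pow_eq_norm_zero ha hx.1, hx.2, norm_zero]
  | succ N ih =>
    obtain h | ⟨y, hy, hfy⟩ := (zerosInUnitBall a).eq_empty_or_nonempty
    · simp [h]
    set b : ℕ → K := fun i => ∑' j, a (i + j + 1) * y ^ j
    have hb : ∀ i, ‖b i‖ ≤ ‖a (N + 1)‖ := fun i => norm_tsum_mul_pow_le (fun j => ha _) hy.le
    have hbN : ‖b N‖ = ‖a (N + 1)‖ :=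
      norm_tsum_mul_pow_eq_norm_zero (a := fun j => a (N + j + 1)) (fun j => ha _) hy
    have hsub : zerosInUnitBall a ⊆ insert y (zerosInUnitBall b) := by
      rintro x ⟨hx, hfx⟩
      have hfactor := tsum_mul_pow_sub_tsum_mul_pow ha hx hy
      rw [hfx, hfy, sub_zero, eq_comm, mul_eq_zero, sub_eq_zero] at hfactor
      exact hfactor.imp id fun h => ⟨hx, h⟩
    have hbN0 : b N ≠ 0 := norm_ne_zero_iff.1 (hbN ▸ norm_ne_zero_iff.2 hN)
    calc (zerosInUnitBall a).encard ≤ (zerosInUnitBall b).encard + 1 :=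
          (Set.encard_le_encard hsub).trans (Set.encard_insert_le _ _)
      _ ≤ N + 1 := by gcongr; exact ih hbN0 fun i => (hb i).trans_eq hbN.symm

end Complete

end UnitBall

theorem bounded_power_series_finitely_many_zeroes_general
    (p : ℕ) [Fact p.Prime] (L : Type*) [NormedField L] [NormedAlgebra ℚ_[p] L]
    [FiniteDimensional ℚ_[p] L]
    (K : Type*) [NormedField K] [NormedAlgebra L K] [CompleteSpace K]
    [IsUltrametricDist K]
    (f : PowerSeries L) (hf0 : f ≠ 0)
    (hbdd : ∃ C : ℝ, ∀ n : ℕ, ‖(PowerSeries.coeff n) f‖ ≤ C) :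
    (∀ x : K, ‖x‖ < 1 →
      Summable (fun n : ℕ => algebraMap L K ((PowerSeries.coeff n) f) * x ^ n)) ∧
    {x : K | ‖x‖ < 1 ∧
      ∑' n : ℕ, algebraMap L K ((PowerSeries.coeff n) f) * x ^ n = 0}.Finite := by
  obtain ⟨C, hC⟩ := hbdd
  have : IsUltrametricDist L := .of_normedAlgebra' K
  have : ProperSpace L := FiniteDimensional.proper ℚ_[p] L
  obtain ⟨N, hN⟩ := exists_forall_norm_le_norm_of_isBounded (c := fun n => coeff n f)
    (isBounded_iff_forall_norm_le.2 ⟨C, Set.forall_mem_range.2 hC⟩)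
  have hfN : coeff N f ≠ 0 := fun h =>
    hf0 <| PowerSeries.ext fun n => by simpa [h] using hN n
  have hnorm : ∀ n, ‖algebraMap L K (coeff n f)‖ = ‖coeff n f‖ := fun n => norm_algebraMap' K _
  refine ⟨fun x hx => summable_mul_pow_of_norm_le (fun n => (hnorm n).trans_le (hC n)) hx, ?_⟩
  refine Set.finite_of_encard_le_coe (encard_zerosInUnitBall_le (N := N) ?_ fun n => ?_)
  · exact (map_ne_zero (algebraMap L K)).2 hfN
  · simpa only [hnorm] using hN n

/-- Let `p` be a prime, `L` a finite extension of `ℚ_p`, and `K` an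
algebraically closed field containing `L`, complete with respect to a valuation
(ultrametric absolute value) extending the `p`-adic one.  Let `f = ∑ a_n T^n ∈ L[[T]]`
be a nonzero power series whose coefficients have valuations bounded below (equivalently,
norms bounded above, i.e. `f ∈ O_L[[T]] ⊗_{O_L} L`).  Then `f` converges at every
`x ∈ K` with `v_p(x) > 0` (i.e. `‖x‖ < 1`), and the set of its zeros on the open unit
disk of `K` is finite. -/
theorem bounded_power_series_finitely_many_zeroes
    (p : ℕ) [Fact p.Prime] (L : Type*) [NormedField L] [NormedAlgebra ℚ_[p] L]
    [FiniteDimensional ℚ_[p] L]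
    (K : Type*) [NormedField K] [NormedAlgebra L K] [IsAlgClosed K] [CompleteSpace K]
    [IsUltrametricDist K]
    (f : PowerSeries L) (hf0 : f ≠ 0)
    (hbdd : ∃ C : ℝ, ∀ n : ℕ, ‖(PowerSeries.coeff n) f‖ ≤ C) :
    (∀ x : K, ‖x‖ < 1 →
      Summable (fun n : ℕ => algebraMap L K ((PowerSeries.coeff n) f) * x ^ n)) ∧
    {x : K | ‖x‖ < 1 ∧
      ∑' n : ℕ, algebraMap L K ((PowerSeries.coeff n) f) * x ^ n = 0}.Finite :=
  bounded_power_series_finitely_many_zeroes_general p L K f hf0 hbdd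
end

section
/- Let p be a prime, L a complete extension of ℚ_p, and r ∈ ℝ_{≥0}. A formal power series f ∈ L[[X]] lies in R⁺_r if and only if inf_{h≥0} ( v_h(f) + r·h ) > −∞ (i.e. the infimum over nonnegative integers h of v_h(f) + r·h is not −∞). -/
namespace Stmt10

open Filter PowerSeries

open scoped Classical

/-- The valuation `v_p(x) = -log_p ‖x‖` of `L` extending the `p`-adic valuation,
with value `⊤` at `0`. -/
noncomputable def vp (p : ℕ) {L : Type*} [NormedField L] (x : L) : EReal :=
  if x = 0 then ⊤ else ((-Real.logb p ‖x‖ : ℝ) : EReal)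

/-- `u_h = 1 / (p^h (p - 1))`. -/
noncomputable def u (p : ℕ) (h : ℕ) : ℝ := 1 / ((p : ℝ) ^ h * ((p : ℝ) - 1))

/-- The Gauss valuation `v_h(f) = inf_k (v_p(a_k) + k u_h)` of `f = ∑ a_k X^k ∈ L[[X]]`. -/
noncomputable def vh (p : ℕ) {L : Type*} [NormedField L] (f : PowerSeries L) (h : ℕ) :
    EReal :=
  ⨅ k : ℕ, vp p ((PowerSeries.coeff k) f) + (((k : ℝ) * u p h : ℝ) : EReal)

/-- `ℓ(n) = min {m : n < p^m}`. -/
noncomputable def ell (p n : ℕ) : ℕ := sInf {m : ℕ | n < p ^ m}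

/-- `R⁺_r`: the set of `f = ∑ a_n X^n ∈ L[[X]]` such that `v_p(a_n) + r ℓ(n)` is
bounded below. -/
def Rplus (p : ℕ) (L : Type*) [NormedField L] (r : ℝ) : Set (PowerSeries L) :=
  {f | ∃ B : ℝ, ∀ k : ℕ, (PowerSeries.coeff k) f ≠ 0 →
    B ≤ -Real.logb p ‖(PowerSeries.coeff k) f‖ + r * (ell p k)}

/-!
Taking `h = ℓ(k)` bounds `v_p(a_k) + r ℓ(k)` below by `v_h(f) + r h - 1/(p-1)`, because
`k u_{ℓ(k)} ≤ 1/(p-1)`. Conversely `r ℓ(k) ≤ k u_h + r h + r²(p-1)` for all `k` and `h`: this is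
clear when `ℓ(k) ≤ h`, and otherwise `k u_h ≥ p^{ℓ(k)-h-1}/(p-1)` grows exponentially in the gap
`ℓ(k) - h`, while `r ℓ(k)` exceeds `r h` only linearly in it.
-/

lemma succ_sq_le_four_mul_two_pow (n : ℕ) : (n + 1) ^ 2 ≤ 4 * 2 ^ n := by
  induction n with
  | zero => norm_num
  | succ n ih =>
    have := Nat.lt_two_pow_self (n := n)
    rw [pow_succ 2 n]
    nlinarith

lemma mul_succ_le_two_pow_div_add {a : ℝ} (ha : 0 < a) (r : ℝ) (n : ℕ) :
    r * (n + 1) ≤ 2 ^ n / a + r ^ 2 * a := by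
  have hsq : ((n : ℝ) + 1) ^ 2 ≤ 4 * 2 ^ n := by exact_mod_cast succ_sq_le_four_mul_two_pow n
  rw [div_add' _ _ _ ha.ne', le_div_iff₀ ha]
  nlinarith [sq_nonneg (((n : ℝ) + 1) / 2 - r * a)]

lemma lt_pow_ell {p : ℕ} (hp : 1 < p) (k : ℕ) : k < p ^ ell p k :=
  Nat.sInf_mem (s := {m | k < p ^ m}) ⟨k, Nat.lt_pow_self hp⟩

lemma pow_le_of_lt_ell {p k m : ℕ} (hm : m < ell p k) : p ^ m ≤ k :=
  not_lt.mp (Nat.notMem_of_lt_sInf (s := {m | k < p ^ m}) hm)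

lemma mul_u_ell_le {p : ℕ} (hp : 1 < p) (k : ℕ) : k * u p (ell p k) ≤ 1 / ((p : ℝ) - 1) := by
  have hp' : (0 : ℝ) < p - 1 := by rw [sub_pos]; exact_mod_cast hp
  have hk : (k : ℝ) ≤ p ^ ell p k := by exact_mod_cast (lt_pow_ell hp k).le
  rw [u, mul_one_div, div_le_div_iff₀ (by positivity) hp']
  nlinarith

lemma pow_div_le_mul_u {p k h n : ℕ} (hp : 1 < p) (hn : h + n < ell p k) :
    (p : ℝ) ^ n / (p - 1) ≤ k * u p h := by
  have hp' : (0 : ℝ) < p - 1 := by rw [sub_pos]; exact_mod_cast hp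
  have hk : (p : ℝ) ^ h * p ^ n ≤ k := by exact_mod_cast pow_add p h n ▸ pow_le_of_lt_ell hn
  rw [u, mul_one_div, div_le_div_iff₀ hp' (by positivity)]
  nlinarith [pow_pos hp' h]

lemma mul_ell_le_mul_u_add {p : ℕ} (hp : 1 < p) {r : ℝ} (hr : 0 ≤ r) (k h : ℕ) :
    r * ell p k ≤ k * u p h + r * h + r ^ 2 * (p - 1) := by
  have hp' : (0 : ℝ) < p - 1 := by rw [sub_pos]; exact_mod_cast hp
  have hu : 0 ≤ (k : ℝ) * u p h := by rw [u]; positivity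
  rcases le_or_gt (ell p k) h with hle | hlt
  · have : (ell p k : ℝ) ≤ h := by exact_mod_cast hle
    nlinarith
  · obtain ⟨n, hn⟩ := Nat.exists_eq_add_of_lt hlt
    have h2p : (2 : ℝ) ^ n / (p - 1) ≤ (p : ℝ) ^ n / (p - 1) := by
      gcongr
      exact_mod_cast hp
    have hgap := pow_div_le_mul_u (k := k) (h := h) (n := n) hp (by omega)
    have hlin := mul_succ_le_two_pow_div_add hp' r n
    rw [hn]
    push_cast
    linarith

lemma coe_le_vh_add_coe_iff {p : ℕ} {L : Type*} [NormedField L] (f : PowerSeries L) (h : ℕ)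
    (c s : ℝ) :
    (c : EReal) ≤ vh p f h + s ↔
      ∀ k, coeff k f ≠ 0 → c ≤ -Real.logb p ‖coeff k f‖ + k * u p h + s := by
  rw [← EReal.sub_le_iff_le_add (.inl (EReal.coe_ne_bot s)) (.inl (EReal.coe_ne_top s)),
    ← EReal.coe_sub, vh, le_iInf_iff]
  refine forall_congr' fun k => ?_
  by_cases hk : coeff k f = 0
  · simp only [vp, hk, if_true, EReal.top_add_coe, le_top, ne_eq, not_true_eq_false,
      IsEmpty.forall_iff]
  · rw [vp, if_neg hk, ← EReal.coe_add, EReal.coe_le_coe_iff]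
    simp only [ne_eq, hk, not_false_eq_true, forall_const]
    constructor <;> intro <;> linarith

lemma EReal.bot_lt_iInf_iff {ι : Type*} (x : ι → EReal) :
    ⊥ < ⨅ i, x i ↔ ∃ c : ℝ, ∀ i, (c : EReal) ≤ x i := by
  refine ⟨fun hx => ?_, fun ⟨c, hc⟩ => (EReal.bot_lt_coe c).trans_le (le_iInf hc)⟩
  obtain ⟨c, -, hc⟩ := EReal.exists_between_coe_real hx
  exact ⟨c, fun i => hc.le.trans (iInf_le x i)⟩

theorem mem_Rplus_iff_gauss_valuations_bounded_general
    (p : ℕ) [Fact p.Prime] (L : Type*) [NormedField L]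
    (r : ℝ) (hr : 0 ≤ r) (f : PowerSeries L) :
    f ∈ Rplus p L r ↔ ⊥ < ⨅ h : ℕ, vh p f h + (((r * (h : ℝ)) : ℝ) : EReal) := by
  have hp := (Fact.out : p.Prime).one_lt
  simp only [EReal.bot_lt_iInf_iff, coe_le_vh_add_coe_iff]
  constructor
  · rintro ⟨B, hB⟩
    refine ⟨B - r ^ 2 * (p - 1), fun h k hk => ?_⟩
    linarith [hB k hk, mul_ell_le_mul_u_add hp hr k h]
  · rintro ⟨c, hc⟩
    refine ⟨c - 1 / (p - 1), fun k hk => ?_⟩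
    linarith [hc (ell p k) k hk, mul_u_ell_le hp k]

/-- Let `p` be a prime, `L` a complete (ultrametric) extension of
`ℚ_p`, and `r ≥ 0`.  A formal power series `f ∈ L[[X]]` lies in `R⁺_r` if and only if
`inf_{h ≥ 0} (v_h(f) + r h) > -∞`. -/
theorem mem_Rplus_iff_gauss_valuations_bounded
    (p : ℕ) [Fact p.Prime] (L : Type*) [NormedField L] [NormedAlgebra ℚ_[p] L]
    [CompleteSpace L] [IsUltrametricDist L] (r : ℝ) (hr : 0 ≤ r) (f : PowerSeries L) :
    f ∈ Rplus p L r ↔ ⊥ < ⨅ h : ℕ, vh p f h + (((r * (h : ℝ)) : ℝ) : EReal) :=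
  mem_Rplus_iff_gauss_valuations_bounded_general p L r hr f

end Stmt10
end

section
/- Let p be a prime, L a complete extension of ℚ_p, and r ∈ ℝ_{≥0}. The space R⁺_r, equipped with the valuation v_r(f) = inf_{h≥0} ( v_h(f) + r·h ) (equivalently, the norm p^{−v_r(f)}), is a Banach space over L: every Cauchy sequence in R⁺_r with respect to this norm converges to an element of R⁺_r. -/
namespace Stmt11

open Filter PowerSeries

open scoped Classical

/-- The valuation `v_p(x) = -log_p ‖x‖` of `L` extending the `p`-adic valuation,
with value `⊤` at `0`. -/
noncomputable def vp (p : ℕ) {L : Type*} [NormedField L] (x : L) : EReal :=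
  if x = 0 then ⊤ else ((-Real.logb p ‖x‖ : ℝ) : EReal)

/-- `u_h = 1 / (p^h (p - 1))`. -/
noncomputable def u (p : ℕ) (h : ℕ) : ℝ := 1 / ((p : ℝ) ^ h * ((p : ℝ) - 1))

/-- The Gauss valuation `v_h(f) = inf_k (v_p(a_k) + k u_h)` of `f = ∑ a_k X^k ∈ L[[X]]`. -/
noncomputable def vh (p : ℕ) {L : Type*} [NormedField L] (f : PowerSeries L) (h : ℕ) :
    EReal :=
  ⨅ k : ℕ, vp p ((PowerSeries.coeff k) f) + (((k : ℝ) * u p h : ℝ) : EReal)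

/-- `ℓ(n) = min {m : n < p^m}`. -/
noncomputable def ell (p n : ℕ) : ℕ := sInf {m : ℕ | n < p ^ m}

/-- `R⁺_r`: the set of `f = ∑ a_n X^n ∈ L[[X]]` such that `v_p(a_n) + r ℓ(n)` is
bounded below. -/
def Rplus (p : ℕ) (L : Type*) [NormedField L] (r : ℝ) : Set (PowerSeries L) :=
  {f | ∃ B : ℝ, ∀ k : ℕ, (PowerSeries.coeff k) f ≠ 0 →
    B ≤ -Real.logb p ‖(PowerSeries.coeff k) f‖ + r * (ell p k)}

/-- The valuation `v_r(f) = inf_{h ≥ 0} (v_h(f) + r h)` on `R⁺_r` (corresponding to the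
norm `p^{-v_r(f)}`). -/
noncomputable def vr (p : ℕ) {L : Type*} [NormedField L] (r : ℝ) (f : PowerSeries L) :
    EReal :=
  ⨅ h : ℕ, vh p f h + (((r * (h : ℝ)) : ℝ) : EReal)

/-! A bound `C ≤ v_r(f)` says exactly `‖a_k‖ ≤ p ^ (k u_h + r h - C)` for all `h, k`. So a
`v_r`-Cauchy sequence is coefficientwise Cauchy, and its coefficientwise limit `G` inherits the
uniform bounds, i.e. `F n → G` for `v_r`. Taking `h = ℓ(k)`, where `k u_h ≤ 1`, shows that every
series of finite `v_r` lies in `R⁺_r`; hence so does `G = F N - (F N - G)`. -/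

open scoped Topology

section

variable {p : ℕ} {L : Type*} [NormedField L]

lemma le_neg_logb_add_iff (hp : 1 < p) {B t a : ℝ} (ha : 0 < a) :
    B ≤ -Real.logb p a + t ↔ a ≤ (p : ℝ) ^ (t - B) := by
  rw [← Real.logb_le_iff_le_rpow (by exact_mod_cast hp) ha]
  constructor <;> intro <;> linarith

lemma coe_le_add_coe_iff {C c : ℝ} {x : EReal} :
    (C : EReal) ≤ x + c ↔ ((C - c : ℝ) : EReal) ≤ x := by
  rw [EReal.coe_sub]
  exact (EReal.sub_le_iff_le_add (.inl (EReal.coe_ne_bot c))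
    (.inl (EReal.coe_ne_top c))).symm

lemma coe_le_vp_add_iff (hp : 1 < p) {C t : ℝ} {x : L} :
    (C : EReal) ≤ vp p x + t ↔ ‖x‖ ≤ (p : ℝ) ^ (t - C) := by
  unfold vp
  split_ifs with hx
  · simp only [hx, norm_zero, EReal.top_add_coe, le_top, true_iff]
    exact Real.rpow_nonneg (by positivity) _
  · rw [← EReal.coe_add, EReal.coe_le_coe_iff]
    exact le_neg_logb_add_iff hp (norm_pos_iff.mpr hx)

lemma coe_le_vr_iff (hp : 1 < p) {r C : ℝ} {f : PowerSeries L} :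
    (C : EReal) ≤ vr p r f ↔
      ∀ h k : ℕ, ‖coeff k f‖ ≤ (p : ℝ) ^ ((k : ℝ) * u p h + r * h - C) := by
  unfold vr vh
  simp only [le_iInf_iff, coe_le_add_coe_iff, coe_le_vp_add_iff hp, sub_sub_eq_add_sub]

lemma lt_pow_ell (hp : 1 < p) (k : ℕ) : k < p ^ ell p k :=
  Nat.sInf_mem (⟨k, Nat.lt_pow_self hp⟩ : {m : ℕ | k < p ^ m}.Nonempty)

lemma natCast_mul_u_ell_le_one (hp : 1 < p) (k : ℕ) : (k : ℝ) * u p (ell p k) ≤ 1 := by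
  have hk : (k : ℝ) ≤ (p : ℝ) ^ ell p k := by exact_mod_cast (lt_pow_ell hp k).le
  have hp' : (2 : ℝ) ≤ p := by exact_mod_cast hp
  have hpow : (0 : ℝ) < (p : ℝ) ^ ell p k := by positivity
  rw [u, mul_one_div, div_le_one (mul_pos hpow (by linarith))]
  nlinarith

lemma mem_Rplus_iff (hp : 1 < p) {r : ℝ} {f : PowerSeries L} :
    f ∈ Rplus p L r ↔ ∃ B : ℝ, ∀ k, ‖coeff k f‖ ≤ (p : ℝ) ^ (r * ell p k - B) := by
  refine exists_congr fun B => forall_congr' fun k => ?_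
  by_cases hk : coeff k f = 0
  · simp only [hk, ne_eq, not_true_eq_false, IsEmpty.forall_iff, norm_zero, true_iff]
    positivity
  · simp only [ne_eq, hk, not_false_eq_true, forall_const]
    exact le_neg_logb_add_iff hp (norm_pos_iff.mpr hk)

lemma sub_mem_Rplus (hp : 1 < p) {r : ℝ} {f g : PowerSeries L}
    (hf : f ∈ Rplus p L r) (hg : g ∈ Rplus p L r) : f - g ∈ Rplus p L r := by
  rw [mem_Rplus_iff hp] at *
  obtain ⟨B₁, hB₁⟩ := hf
  obtain ⟨B₂, hB₂⟩ := hg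
  refine ⟨min B₁ B₂ - 1, fun k => ?_⟩
  have hp₂ : (2 : ℝ) ≤ p := by exact_mod_cast hp
  set x := r * ell p k
  have hle : ∀ B, min B₁ B₂ ≤ B → (p : ℝ) ^ (x - B) ≤ (p : ℝ) ^ (x - min B₁ B₂) :=
    fun B hB => Real.rpow_le_rpow_of_exponent_le (by linarith) (by linarith)
  calc ‖coeff k (f - g)‖ ≤ ‖coeff k f‖ + ‖coeff k g‖ := by
        rw [map_sub]; exact norm_sub_le _ _
    _ ≤ 2 * (p : ℝ) ^ (x - min B₁ B₂) := by
      linarith [(hB₁ k).trans (hle B₁ (min_le_left _ _)),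
        (hB₂ k).trans (hle B₂ (min_le_right _ _))]
    _ ≤ (p : ℝ) ^ (1 : ℝ) * (p : ℝ) ^ (x - min B₁ B₂) := by
      rw [Real.rpow_one]; gcongr
    _ = (p : ℝ) ^ (x - (min B₁ B₂ - 1)) := by
      rw [← Real.rpow_add (by positivity)]; ring_nf

lemma mem_Rplus_of_coe_le_vr (hp : 1 < p) {r C : ℝ} {f : PowerSeries L}
    (hf : (C : EReal) ≤ vr p r f) : f ∈ Rplus p L r := by
  rw [mem_Rplus_iff hp]
  refine ⟨C - 1, fun k => ((coe_le_vr_iff hp).mp hf (ell p k) k).trans ?_⟩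
  have := natCast_mul_u_ell_le_one hp k
  exact Real.rpow_le_rpow_of_exponent_le (by exact_mod_cast hp.le) (by linarith)

lemma cauchySeq_coeff (hp : 1 < p) {r : ℝ} {F : ℕ → PowerSeries L}
    (hF : ∀ C : ℝ, ∃ N : ℕ, ∀ m ≥ N, ∀ n ≥ N, (C : EReal) ≤ vr p r (F m - F n)) (k : ℕ) :
    CauchySeq fun n => coeff k (F n) := by
  have hp₁ : (1 : ℝ) < p := by exact_mod_cast hp
  rw [Metric.cauchySeq_iff]
  intro ε hε
  obtain ⟨N, hN⟩ := hF (k * u p 0 - Real.logb p ε + 1)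
  refine ⟨N, fun m hm n hn => ?_⟩
  rw [dist_eq_norm, ← map_sub]
  calc ‖coeff k (F m - F n)‖ ≤ (p : ℝ) ^ (Real.logb p ε - 1) := by
        convert (coe_le_vr_iff hp).mp (hN m hm n hn) 0 k using 2; push_cast; ring
    _ = ε / p := by
      rw [Real.rpow_sub (by positivity), Real.rpow_logb (by positivity) hp₁.ne' hε,
        Real.rpow_one]
    _ < ε := div_lt_self hε hp₁

lemma coe_le_vr_of_tendsto_coeff (hp : 1 < p) {r C : ℝ} {F : ℕ → PowerSeries L}
    {f : PowerSeries L} (hlim : ∀ k, Tendsto (fun n => coeff k (F n)) atTop (𝓝 (coeff k f)))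
    (hF : ∀ᶠ n in atTop, (C : EReal) ≤ vr p r (F n)) : (C : EReal) ≤ vr p r f := by
  rw [coe_le_vr_iff hp]
  intro h k
  refine le_of_tendsto (hlim k).norm ?_
  filter_upwards [hF] with n hn using (coe_le_vr_iff hp).mp hn h k
end

theorem Rplus_is_banach_general
    (p : ℕ) [Fact p.Prime] (L : Type*) [NormedField L]
    [CompleteSpace L] (r : ℝ)
    (F : ℕ → PowerSeries L) (hF : ∀ n, F n ∈ Rplus p L r)
    (hcauchy : ∀ C : ℝ, ∃ N : ℕ, ∀ m ≥ N, ∀ n ≥ N,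
      (C : EReal) ≤ vr p r (F m - F n)) :
    ∃ G ∈ Rplus p L r, ∀ C : ℝ, ∃ N : ℕ, ∀ n ≥ N, (C : EReal) ≤ vr p r (F n - G) := by
  have hp : 1 < p := (Fact.out : p.Prime).one_lt
  choose g hg using fun k => cauchySeq_tendsto_of_complete (cauchySeq_coeff hp hcauchy k)
  have hconv : ∀ C : ℝ, ∃ N : ℕ, ∀ n ≥ N, (C : EReal) ≤ vr p r (F n - mk g) := by
    intro C
    obtain ⟨N, hN⟩ := hcauchy C
    refine ⟨N, fun n hn => coe_le_vr_of_tendsto_coeff hp (fun k => ?_)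
      (eventually_atTop.mpr ⟨N, hN n hn⟩)⟩
    simpa only [map_sub, coeff_mk] using tendsto_const_nhds.sub (hg k)
  obtain ⟨N, hN⟩ := hconv 0
  refine ⟨mk g, ?_, hconv⟩
  simpa only [sub_sub_cancel] using
    sub_mem_Rplus hp (hF N) (mem_Rplus_of_coe_le_vr hp (hN N le_rfl))

/-- Let `p` be a prime, `L` a complete (ultrametric) extension of
`ℚ_p`, and `r ≥ 0`.  The space `R⁺_r`, equipped with the valuation
`v_r(f) = inf_{h ≥ 0} (v_h(f) + r h)` (equivalently the norm `p^{-v_r(f)}`), is a Banach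
space over `L`: every Cauchy sequence in `R⁺_r` (i.e. `v_r(F m - F n) → ∞`) converges to
an element of `R⁺_r` (i.e. there is `G ∈ R⁺_r` with `v_r(F n - G) → ∞`). -/
theorem Rplus_is_banach
    (p : ℕ) [Fact p.Prime] (L : Type*) [NormedField L] [NormedAlgebra ℚ_[p] L]
    [CompleteSpace L] [IsUltrametricDist L] (r : ℝ) (hr : 0 ≤ r)
    (F : ℕ → PowerSeries L) (hF : ∀ n, F n ∈ Rplus p L r)
    (hcauchy : ∀ C : ℝ, ∃ N : ℕ, ∀ m ≥ N, ∀ n ≥ N,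
      (C : EReal) ≤ vr p r (F m - F n)) :
    ∃ G ∈ Rplus p L r, ∀ C : ℝ, ∃ N : ℕ, ∀ n ≥ N, (C : EReal) ≤ vr p r (F n - G) :=
  Rplus_is_banach_general p L r F hF hcauchy

end Stmt11
end

section
/- Let p be a prime, L a complete extension of ℚ_p, and r, s ∈ ℝ_{≥0}. If f ∈ R⁺_r and g ∈ R⁺_s, then the product fg lies in R⁺_{r+s}. -/
namespace Stmt12

open Filter PowerSeries

open scoped Classical

/-- The valuation `v_p(x) = -log_p ‖x‖` of `L` extending the `p`-adic valuation,
with value `⊤` at `0`. -/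
noncomputable def vp (p : ℕ) {L : Type*} [NormedField L] (x : L) : EReal :=
  if x = 0 then ⊤ else ((-Real.logb p ‖x‖ : ℝ) : EReal)

/-- `u_h = 1 / (p^h (p - 1))`. -/
noncomputable def u (p : ℕ) (h : ℕ) : ℝ := 1 / ((p : ℝ) ^ h * ((p : ℝ) - 1))

/-- The Gauss valuation `v_h(f) = inf_k (v_p(a_k) + k u_h)` of `f = ∑ a_k X^k ∈ L[[X]]`. -/
noncomputable def vh (p : ℕ) {L : Type*} [NormedField L] (f : PowerSeries L) (h : ℕ) :
    EReal :=
  ⨅ k : ℕ, vp p ((PowerSeries.coeff k) f) + (((k : ℝ) * u p h : ℝ) : EReal)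

/-- `ℓ(n) = min {m : n < p^m}`. -/
noncomputable def ell (p n : ℕ) : ℕ := sInf {m : ℕ | n < p ^ m}

/-- `R⁺_r`: the set of `f = ∑ a_n X^n ∈ L[[X]]` such that `v_p(a_n) + r ℓ(n)` is
bounded below. -/
def Rplus (p : ℕ) (L : Type*) [NormedField L] (r : ℝ) : Set (PowerSeries L) :=
  {f | ∃ B : ℝ, ∀ k : ℕ, (PowerSeries.coeff k) f ≠ 0 →
    B ≤ -Real.logb p ‖(PowerSeries.coeff k) f‖ + r * (ell p k)}

theorem ell_monotone {p : ℕ} (hp : 1 < p) : Monotone (ell p) := fun _ k hik =>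
  Nat.sInf_le (hik.trans_lt (Nat.sInf_mem (⟨k, Nat.lt_pow_self hp⟩ : ∃ m, k < p ^ m)))

theorem exists_norm_coeff_mul_le {R : Type*} [NormedRing R] [IsUltrametricDist R]
    (f g : PowerSeries R) (k : ℕ) :
    ∃ i j, i + j = k ∧ ‖coeff k (f * g)‖ ≤ ‖coeff i f‖ * ‖coeff j g‖ := by
  obtain ⟨⟨i, j⟩, hij, hle⟩ := IsUltrametricDist.exists_norm_finsetSum_le_of_nonempty
    (t := Finset.HasAntidiagonal.antidiagonal k) ⟨(0, k), by simp⟩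
    fun q => coeff q.1 f * coeff q.2 g
  refine ⟨i, j, Finset.HasAntidiagonal.mem_antidiagonal.mp hij, ?_⟩
  rw [coeff_mul]
  exact hle.trans (norm_mul_le _ _)

theorem exists_neg_logb_norm_coeff_le {K : Type*} [NormedField K] [IsUltrametricDist K]
    {b : ℝ} (hb : 1 < b) (f g : PowerSeries K) {k : ℕ} (hk : coeff k (f * g) ≠ 0) :
    ∃ i j, i + j = k ∧ coeff i f ≠ 0 ∧ coeff j g ≠ 0 ∧
      -Real.logb b ‖coeff i f‖ + -Real.logb b ‖coeff j g‖ ≤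
        -Real.logb b ‖coeff k (f * g)‖ := by
  obtain ⟨i, j, hij, hle⟩ := exists_norm_coeff_mul_le f g k
  have hprod_pos : 0 < ‖coeff i f‖ * ‖coeff j g‖ := (norm_pos_iff.mpr hk).trans_le hle
  have hi : coeff i f ≠ 0 := norm_pos_iff.mp (pos_of_mul_pos_left hprod_pos (norm_nonneg _))
  have hj : coeff j g ≠ 0 := norm_pos_iff.mp (pos_of_mul_pos_right hprod_pos (norm_nonneg _))
  refine ⟨i, j, hij, hi, hj, ?_⟩
  rw [← neg_add, neg_le_neg_iff,
    ← Real.logb_mul (norm_ne_zero_iff.mpr hi) (norm_ne_zero_iff.mpr hj)]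
  exact Real.logb_le_logb_of_le hb (norm_pos_iff.mpr hk) hle

theorem Rplus_mul_general
    (p : ℕ) [Fact p.Prime] (L : Type*) [NormedField L]
    [IsUltrametricDist L]
    (r s : ℝ) (hr : 0 ≤ r) (hs : 0 ≤ s)
    (f g : PowerSeries L) (hf : f ∈ Rplus p L r) (hg : g ∈ Rplus p L s) :
    f * g ∈ Rplus p L (r + s) := by
  obtain ⟨Bf, hBf⟩ := hf
  obtain ⟨Bg, hBg⟩ := hg
  have hp : 1 < p := (Fact.out : p.Prime).one_lt
  refine ⟨Bf + Bg, fun k hk => ?_⟩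
  obtain ⟨i, j, rfl, hi, hj, hval⟩ :=
    exists_neg_logb_norm_coeff_le (b := p) (by exact_mod_cast hp) f g hk
  have hell_i : r * ell p i ≤ r * ell p (i + j) := by
    gcongr
    exact ell_monotone hp (Nat.le_add_right i j)
  have hell_j : s * ell p j ≤ s * ell p (i + j) := by
    gcongr
    exact ell_monotone hp (Nat.le_add_left j i)
  linarith [hBf i hi, hBg j hj]

/-- Let `p` be a prime, `L` a complete (ultrametric) extension of
`ℚ_p`, and `r, s ≥ 0`.  If `f ∈ R⁺_r` and `g ∈ R⁺_s` then `f g ∈ R⁺_{r+s}`. -/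
theorem Rplus_mul
    (p : ℕ) [Fact p.Prime] (L : Type*) [NormedField L] [NormedAlgebra ℚ_[p] L]
    [CompleteSpace L] [IsUltrametricDist L]
    (r s : ℝ) (hr : 0 ≤ r) (hs : 0 ≤ s)
    (f g : PowerSeries L) (hf : f ∈ Rplus p L r) (hg : g ∈ Rplus p L s) :
    f * g ∈ Rplus p L (r + s) :=
  Rplus_mul_general p L r s hr hs f g hf hg

end Stmt12
end
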